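/- Let F' be a Q-subtree of a tree-graded space F (i.e., F' is path-connected and contains every piece of F that meets F' in at least two points). Then F' is totally geodesic in F: for any two points x, y ∈ F', every geodesic in F connecting x and y is contained in F'. Consequently, for any x ∈ F and y ∈ F', the intersection of any geodesic [y,x] with F' is either a closed subsegment [y,z] or a half-open subinterval [y,z[ of [y,x]. -/

import Mathlib

/-- A map `γ` is a geodesic (unit-speed) on the interval `[a,b]`. -/
def IsGeodesicOn {F : Type*} [MetricSpace F] (γ : ℝ → F) (a b : ℝ) : Prop :=
  ∀ s ∈ Set.Icc a b, ∀ t ∈ Set.Icc a b, dist (γ s) (γ t) = |s - t|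

/-- A metric space is geodesic if every two points are joined by a geodesic. -/
def GeodesicSpace (F : Type*) [MetricSpace F] : Prop :=
  ∀ x y : F, ∃ γ : ℝ → F, γ 0 = x ∧ γ (dist x y) = y ∧ IsGeodesicOn γ 0 (dist x y)

/-- A subset is geodesic: any two of its points are joined by a geodesic inside it. -/
def GeodesicSubset {F : Type*} [MetricSpace F] (p : Set F) : Prop :=
  ∀ x ∈ p, ∀ y ∈ p, ∃ γ : ℝ → F, γ 0 = x ∧ γ (dist x y) = y ∧
    IsGeodesicOn γ 0 (dist x y) ∧ γ '' Set.Icc 0 (dist x y) ⊆ p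

/-- A nontrivial simple geodesic triangle: a simple loop `γ` on `[0,L]` composed of three
geodesics `[0,a]`, `[a,b]`, `[b,L]`. -/
structure SimpleGeodesicTriangle {F : Type*} [MetricSpace F]
    (γ : ℝ → F) (a b L : ℝ) : Prop where
  L_pos : 0 < L
  ha : 0 ≤ a
  hab : a ≤ b
  hbL : b ≤ L
  side1 : IsGeodesicOn γ 0 a
  side2 : IsGeodesicOn γ a b
  side3 : IsGeodesicOn γ b L
  closed : γ 0 = γ L
  simple : Set.InjOn γ (Set.Ico 0 L)

/-- `F` is tree-graded with respect to the collection `P` of pieces. -/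
structure IsTreeGraded {F : Type*} [MetricSpace F] (P : Set (Set F)) : Prop where
  pieces_nonempty : ∀ p ∈ P, p.Nonempty
  pieces_closed : ∀ p ∈ P, IsClosed p
  pieces_geodesic : ∀ p ∈ P, GeodesicSubset p
  T1 : ∀ p ∈ P, ∀ q ∈ P, p ≠ q → (p ∩ q).Subsingleton
  T2 : ∀ (γ : ℝ → F) (a b L : ℝ), SimpleGeodesicTriangle γ a b L →
    ∃ p ∈ P, γ '' Set.Icc 0 L ⊆ p

/-- `F'` is a `Q`-subtree of the tree-graded space `(F, P)`: it is path-connected and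
contains every piece meeting it in at least two points. -/
def IsQSubtree {F : Type*} [MetricSpace F] (P : Set (Set F)) (F' : Set F) : Prop :=
  IsPathConnected F' ∧ ∀ p ∈ P, (∃ a ∈ p ∩ F', ∃ b ∈ p ∩ F', a ≠ b) → p ⊆ F'

/-!
All the tree-graded input comes from one fact: if `W` is closed and geodesically star-shaped
and a geodesic with endpoints in `W` leaves `W`, then around each of its points outside `W` it
runs inside a single piece, because the excursion closes up through `W` into a simple geodesic
triangle. From it, every point `u` has a gate in each piece `p`, the point where every geodesic
from `u` first enters `p`, and the gate is locally constant off `p`: a path avoiding `p` keeps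
its gate, and a path reaching `p` passes through the gate of its starting point.

Let `z` lie on a geodesic from `x` to `y` in `F'`, and let `q` be a path in `F'` from `x` to
`y`. If some piece through `z` separates the gates of `x` and `y`, then `q` passes through both
gates, so this piece meets `F'` twice and is contained in `F'`. Otherwise `z` is the gate of `x`
in every piece containing it, and then the condition `d(x, z) + d(z, q τ) = d(x, q τ)` is open
and closed in `τ`; it holds at `q 1 = y`, hence at `q 0 = x`, which forces `z = x`.
-/

open Set Filter Topology

section

variable {F : Type*} [MetricSpace F]

namespace IsGeodesicOn

variable {γ : ℝ → F} {a b : ℝ}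

lemma mono {a' b' : ℝ} (h : IsGeodesicOn γ a b) (hsub : Icc a' b' ⊆ Icc a b) :
    IsGeodesicOn γ a' b' :=
  fun s hs t ht => h s (hsub hs) t (hsub ht)

lemma congr {γ' : ℝ → F} (h : IsGeodesicOn γ a b) (heq : EqOn γ γ' (Icc a b)) :
    IsGeodesicOn γ' a b := by
  intro s hs t ht
  rw [← heq hs, ← heq ht]
  exact h s hs t ht

lemma dist_eq (h : IsGeodesicOn γ a b) {s t : ℝ} (hs : s ∈ Icc a b) (ht : t ∈ Icc a b)
    (hst : s ≤ t) : dist (γ s) (γ t) = t - s := by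
  rw [h s hs t ht, abs_of_nonpos (by linarith), neg_sub]

lemma dist_add_dist (h : IsGeodesicOn γ a b) {t : ℝ} (ht : t ∈ Icc a b) :
    dist (γ a) (γ t) + dist (γ t) (γ b) = dist (γ a) (γ b) := by
  have hab : a ≤ b := ht.1.trans ht.2
  rw [h.dist_eq (left_mem_Icc.2 hab) ht ht.1, h.dist_eq ht (right_mem_Icc.2 hab) ht.2,
    h.dist_eq (left_mem_Icc.2 hab) (right_mem_Icc.2 hab) hab]
  ring

lemma injOn (h : IsGeodesicOn γ a b) : InjOn γ (Icc a b) := by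
  intro s hs t ht hst
  have := h s hs t ht
  rwa [hst, dist_self, eq_comm, abs_eq_zero, sub_eq_zero] at this

lemma continuousOn (h : IsGeodesicOn γ a b) : ContinuousOn γ (Icc a b) :=
  (LipschitzOnWith.of_dist_le_mul fun s hs t ht => by
    rw [h s hs t ht, Real.dist_eq, NNReal.coe_one, one_mul]).continuousOn

lemma isClosed_image (h : IsGeodesicOn γ a b) : IsClosed (γ '' Icc a b) :=
  (isCompact_Icc.image_of_continuousOn h.continuousOn).isClosed

lemma shift (h : IsGeodesicOn γ a b) : IsGeodesicOn (fun τ => γ (a + τ)) 0 (b - a) := by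
  intro s hs t ht
  rw [h (a + s) ⟨by linarith [hs.1], by linarith [hs.2]⟩ (a + t)
    ⟨by linarith [ht.1], by linarith [ht.2]⟩, add_sub_add_left_eq_sub]

lemma comp_const_sub (h : IsGeodesicOn γ a b) (c : ℝ) :
    IsGeodesicOn (fun τ => γ (c - τ)) (c - b) (c - a) := by
  intro s hs t ht
  rw [h (c - s) ⟨by linarith [hs.2], by linarith [hs.1]⟩ (c - t)
    ⟨by linarith [ht.2], by linarith [ht.1]⟩, sub_sub_sub_cancel_left, abs_sub_comm]

lemma comp_sub_const {l : ℝ} (h : IsGeodesicOn γ 0 l) (c : ℝ) :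
    IsGeodesicOn (fun τ => γ (τ - c)) c (c + l) := by
  intro s hs t ht
  rw [h (s - c) ⟨by linarith [hs.1], by linarith [hs.2]⟩ (t - c)
    ⟨by linarith [ht.1], by linarith [ht.2]⟩, sub_sub_sub_cancel_right]

lemma of_dist_le (hlip : ∀ s ∈ Icc a b, ∀ t ∈ Icc a b, s ≤ t → dist (γ s) (γ t) ≤ t - s)
    (hend : dist (γ a) (γ b) = b - a) : IsGeodesicOn γ a b := by
  suffices key : ∀ s ∈ Icc a b, ∀ t ∈ Icc a b, s ≤ t → dist (γ s) (γ t) = t - s by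
    intro s hs t ht
    rcases le_total s t with hst | hts
    · rw [key s hs t ht hst, abs_of_nonpos (by linarith), neg_sub]
    · rw [dist_comm, key t ht s hs hts, abs_of_nonneg (by linarith)]
  intro s hs t ht hst
  have hab : a ≤ b := hs.1.trans hs.2
  have := dist_triangle4 (γ a) (γ s) (γ t) (γ b)
  linarith [hlip a (left_mem_Icc.2 hab) s hs hs.1, hlip t ht b (right_mem_Icc.2 hab) ht.2,
    hlip s hs t ht hst]

end IsGeodesicOn

lemma isGeodesicOn_const (x : F) (a : ℝ) : IsGeodesicOn (fun _ => x) a a := by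
  intro s hs t ht
  rw [le_antisymm hs.2 hs.1, le_antisymm ht.2 ht.1, dist_self, sub_self, abs_zero]

section Concat

variable {X : Type*}

noncomputable def concatAt (γ₁ γ₂ : ℝ → X) (l : ℝ) : ℝ → X :=
  fun τ => if τ ≤ l then γ₁ τ else γ₂ (τ - l)

lemma concatAt_of_le {γ₁ γ₂ : ℝ → X} {l τ : ℝ} (hτ : τ ≤ l) : concatAt γ₁ γ₂ l τ = γ₁ τ :=
  if_pos hτ

lemma concatAt_of_ge {γ₁ γ₂ : ℝ → X} {l τ : ℝ} (hjoin : γ₁ l = γ₂ 0) (hτ : l ≤ τ) :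
    concatAt γ₁ γ₂ l τ = γ₂ (τ - l) := by
  rcases hτ.lt_or_eq with hlt | rfl
  · exact if_neg (not_le.2 hlt)
  · rw [concatAt_of_le le_rfl, hjoin, sub_self]

end Concat

lemma IsGeodesicOn.concat {γ₁ γ₂ : ℝ → F} {l₁ l₂ : ℝ} (h₁ : IsGeodesicOn γ₁ 0 l₁)
    (h₂ : IsGeodesicOn γ₂ 0 l₂) (hl₁ : 0 ≤ l₁) (hl₂ : 0 ≤ l₂) (hjoin : γ₁ l₁ = γ₂ 0)
    (hend : dist (γ₁ 0) (γ₂ l₂) = l₁ + l₂) :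
    IsGeodesicOn (concatAt γ₁ γ₂ l₁) 0 (l₁ + l₂) := by
  have h₂' := h₂.comp_sub_const l₁
  have first : EqOn (concatAt γ₁ γ₂ l₁) γ₁ (Icc 0 l₁) := fun τ hτ => concatAt_of_le hτ.2
  have second : EqOn (concatAt γ₁ γ₂ l₁) (fun τ => γ₂ (τ - l₁)) (Icc l₁ (l₁ + l₂)) :=
    fun τ hτ => concatAt_of_ge hjoin hτ.1
  refine IsGeodesicOn.of_dist_le (fun s hs t ht hst => ?_) ?_
  · rcases le_total t l₁ with htl | hlt
    · rw [first ⟨hs.1, hst.trans htl⟩, first ⟨ht.1, htl⟩,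
        h₁.dist_eq ⟨hs.1, hst.trans htl⟩ ⟨ht.1, htl⟩ hst]
    rcases le_total l₁ s with hls | hsl
    · rw [second ⟨hls, hs.2⟩, second ⟨hlt, ht.2⟩, h₂'.dist_eq ⟨hls, hs.2⟩ ⟨hlt, ht.2⟩ hst]
    · have hmid : concatAt γ₁ γ₂ l₁ l₁ = γ₁ l₁ := concatAt_of_le le_rfl
      calc dist (concatAt γ₁ γ₂ l₁ s) (concatAt γ₁ γ₂ l₁ t)
          ≤ dist (concatAt γ₁ γ₂ l₁ s) (concatAt γ₁ γ₂ l₁ l₁) +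
            dist (concatAt γ₁ γ₂ l₁ l₁) (concatAt γ₁ γ₂ l₁ t) := dist_triangle _ _ _
        _ = (l₁ - s) + (t - l₁) := by
          rw [first ⟨hs.1, hsl⟩, hmid, h₁.dist_eq ⟨hs.1, hsl⟩ ⟨hl₁, le_rfl⟩ hsl, ← hmid,
            second ⟨le_rfl, by linarith⟩, second ⟨hlt, ht.2⟩,
            h₂'.dist_eq ⟨le_rfl, by linarith⟩ ⟨hlt, ht.2⟩ hlt]
        _ = t - s := by ring
  · rw [first ⟨le_rfl, hl₁⟩, second ⟨by linarith, le_rfl⟩]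
    simpa using hend


def JoinedByGeodesicIn (S : Set F) (x y : F) : Prop :=
  ∃ γ : ℝ → F, ∃ l : ℝ, 0 ≤ l ∧ IsGeodesicOn γ 0 l ∧ γ 0 = x ∧ γ l = y ∧ γ '' Icc 0 l ⊆ S

namespace JoinedByGeodesicIn

variable {S T : Set F} {x y : F}

lemma mono (h : JoinedByGeodesicIn S x y) (hST : S ⊆ T) : JoinedByGeodesicIn T x y := by
  obtain ⟨γ, l, hl, hγ, h0, hl', hsub⟩ := h
  exact ⟨γ, l, hl, hγ, h0, hl', hsub.trans hST⟩

lemma symm (h : JoinedByGeodesicIn S x y) : JoinedByGeodesicIn S y x := by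
  obtain ⟨γ, l, hl, hγ, h0, hl', hsub⟩ := h
  refine ⟨fun τ => γ (l - τ), l, hl, by simpa using hγ.comp_const_sub l, by simpa using hl',
    by simpa using h0, ?_⟩
  rintro _ ⟨τ, hτ, rfl⟩
  exact hsub ⟨l - τ, ⟨by linarith [hτ.2], by linarith [hτ.1]⟩, rfl⟩

end JoinedByGeodesicIn

lemma IsGeodesicOn.joinedByGeodesicIn_start {γ : ℝ → F} {L : ℝ} (hγ : IsGeodesicOn γ 0 L)
    {x : F} (hx : x ∈ γ '' Icc 0 L) : JoinedByGeodesicIn (γ '' Icc 0 L) x (γ 0) := by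
  obtain ⟨σ, hσ, rfl⟩ := hx
  exact JoinedByGeodesicIn.symm ⟨γ, σ, hσ.1, hγ.mono (Icc_subset_Icc le_rfl hσ.2), rfl, rfl,
    image_mono (Icc_subset_Icc le_rfl hσ.2)⟩

lemma joinedByGeodesicIn_union {γ₁ γ₂ : ℝ → F} {l₁ l₂ : ℝ} (h₁ : IsGeodesicOn γ₁ 0 l₁)
    (h₂ : IsGeodesicOn γ₂ 0 l₂) (h0 : γ₁ 0 = γ₂ 0) {x : F}
    (hx : x ∈ γ₁ '' Icc 0 l₁ ∪ γ₂ '' Icc 0 l₂) :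
    JoinedByGeodesicIn (γ₁ '' Icc 0 l₁ ∪ γ₂ '' Icc 0 l₂) x (γ₁ 0) := by
  rcases hx with hx | hx
  · exact (h₁.joinedByGeodesicIn_start hx).mono subset_union_left
  · exact h0 ▸ (h₂.joinedByGeodesicIn_start hx).mono subset_union_right

lemma exists_first_mem_of_continuousOn {γ : ℝ → F} {L : ℝ} {K : Set F} (hK : IsClosed K)
    (hγ : ContinuousOn γ (Icc 0 L)) (hL : 0 ≤ L) (hhit : γ L ∈ K) :
    ∃ e ∈ Icc 0 L, γ e ∈ K ∧ ∀ τ ∈ Ico 0 e, γ τ ∉ K := by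
  set S := Icc 0 L ∩ γ ⁻¹' K
  have hbdd : BddBelow S := bddBelow_Icc.mono inter_subset_left
  have hmem : sInf S ∈ S :=
    (hγ.preimage_isClosed_of_isClosed isClosed_Icc hK).csInf_mem ⟨L, ⟨hL, le_rfl⟩, hhit⟩ hbdd
  refine ⟨sInf S, hmem.1, hmem.2, fun τ hτ hτK => hτ.2.not_ge (csInf_le hbdd ?_)⟩
  exact ⟨⟨hτ.1, hτ.2.le.trans hmem.1.2⟩, hτK⟩

lemma IsClosed.exists_gap {E : Set ℝ} (hE : IsClosed E) {a b c : ℝ} (ha : a ∈ E) (hb : b ∈ E)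
    (hc : c ∈ Icc a b) (hcE : c ∉ E) :
    ∃ s t, a ≤ s ∧ s < c ∧ c < t ∧ t ≤ b ∧ s ∈ E ∧ t ∈ E ∧ ∀ τ ∈ Ioo s t, τ ∉ E := by
  have hbddA : BddAbove (E ∩ Icc a c) := bddAbove_Icc.mono inter_subset_right
  have hbddB : BddBelow (E ∩ Icc c b) := bddBelow_Icc.mono inter_subset_right
  have hs := (hE.inter isClosed_Icc).csSup_mem ⟨a, ha, le_rfl, hc.1⟩ hbddA
  have ht := (hE.inter isClosed_Icc).csInf_mem ⟨b, hb, hc.2, le_rfl⟩ hbddB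
  refine ⟨_, _, hs.2.1, hs.2.2.lt_of_ne fun h => hcE (h ▸ hs.1),
    ht.2.1.lt_of_ne fun h => hcE (h ▸ ht.1), ht.2.2, hs.1, ht.1, fun τ hτ hτE => ?_⟩
  rcases le_total τ c with h | h
  · exact hτ.1.not_ge (le_csSup hbddA ⟨hτE, hs.2.1.trans hτ.1.le, h⟩)
  · exact hτ.2.not_ge (csInf_le hbddB ⟨hτE, h, hτ.2.le.trans ht.2.2⟩)

/-! ### Excursions of geodesics into pieces -/

lemma SimpleGeodesicTriangle.of_eqOn {γ a b c : ℝ → F} {la lb lc : ℝ}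
    (ha : IsGeodesicOn a 0 la) (hb : IsGeodesicOn b 0 lb) (hc : IsGeodesicOn c 0 lc)
    (hla : 0 < la) (hlb : 0 ≤ lb) (hlc : 0 ≤ lc) (hca : c lc = a 0)
    (onA : EqOn γ a (Icc 0 la)) (onB : EqOn γ (fun τ => b (τ - la)) (Icc la (la + lb)))
    (onC : EqOn γ (fun τ => c (τ - (la + lb))) (Icc (la + lb) (la + lb + lc)))
    (dab : ∀ i ∈ Ico 0 la, ∀ j ∈ Ico 0 lb, a i ≠ b j)
    (dbc : ∀ i ∈ Ico 0 lb, ∀ j ∈ Ico 0 lc, b i ≠ c j)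
    (dca : ∀ i ∈ Ico 0 lc, ∀ j ∈ Ico 0 la, c i ≠ a j) :
    SimpleGeodesicTriangle γ la (la + lb) (la + lb + lc) := by
  have hA := ha.congr onA.symm
  have hB := (hb.comp_sub_const la).congr onB.symm
  have hC := (hc.comp_sub_const (la + lb)).congr onC.symm
  refine ⟨by linarith, hla.le, by linarith, by linarith, hA, hB, hC, ?_, ?_⟩
  · rw [onA ⟨le_rfl, hla.le⟩, onC ⟨by linarith, le_rfl⟩]
    simp only [add_sub_cancel_left, hca]
  rw [← Ico_union_Ico_eq_Ico (by linarith : 0 ≤ la + lb) (by linarith),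
    ← Ico_union_Ico_eq_Ico hla.le (by linarith : la ≤ la + lb),
    injOn_union
      (Ico_union_Ico_eq_Ico hla.le (by linarith : la ≤ la + lb) ▸ Ico_disjoint_Ico_same),
    injOn_union Ico_disjoint_Ico_same]
  refine ⟨⟨hA.injOn.mono Ico_subset_Icc_self, hB.injOn.mono Ico_subset_Icc_self, ?_⟩,
    hC.injOn.mono Ico_subset_Icc_self, ?_⟩
  · intro i hi j hj
    rw [onA (Ico_subset_Icc_self hi), onB (Ico_subset_Icc_self hj)]
    exact dab i hi _ ⟨by linarith [hj.1], by linarith [hj.2]⟩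
  · intro i hi j hj
    rw [onC (Ico_subset_Icc_self hj)]
    rcases hi with hi | hi
    · rw [onA (Ico_subset_Icc_self hi)]
      exact (dca _ ⟨by linarith [hj.1], by linarith [hj.2]⟩ i hi).symm
    · rw [onB (Ico_subset_Icc_self hi)]
      exact dbc _ ⟨by linarith [hi.1], by linarith [hi.2]⟩ _
        ⟨by linarith [hj.1], by linarith [hj.2]⟩

namespace IsTreeGraded

variable {P : Set (Set F)}

lemma exists_piece_of_loop (hTG : IsTreeGraded P) {a b c : ℝ → F} {la lb lc : ℝ}
    (ha : IsGeodesicOn a 0 la) (hb : IsGeodesicOn b 0 lb) (hc : IsGeodesicOn c 0 lc)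
    (hla : 0 < la) (hlb : 0 ≤ lb) (hlc : 0 ≤ lc)
    (hab : a la = b 0) (hbc : b lb = c 0) (hca : c lc = a 0)
    (dab : ∀ i ∈ Ico 0 la, ∀ j ∈ Ico 0 lb, a i ≠ b j)
    (dbc : ∀ i ∈ Ico 0 lb, ∀ j ∈ Ico 0 lc, b i ≠ c j)
    (dca : ∀ i ∈ Ico 0 lc, ∀ j ∈ Ico 0 la, c i ≠ a j) :
    ∃ p ∈ P, a '' Icc 0 la ⊆ p ∧ b '' Icc 0 lb ⊆ p ∧ c '' Icc 0 lc ⊆ p := by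
  set γ := concatAt (concatAt a b la) c (la + lb)
  have hjoin : concatAt a b la (la + lb) = c 0 := by
    rw [concatAt_of_ge hab (by linarith), add_sub_cancel_left, hbc]
  have onA : EqOn γ a (Icc 0 la) := fun τ hτ =>
    (concatAt_of_le (by linarith [hτ.2])).trans (concatAt_of_le hτ.2)
  have onB : EqOn γ (fun τ => b (τ - la)) (Icc la (la + lb)) := fun τ hτ =>
    (concatAt_of_le hτ.2).trans (concatAt_of_ge hab hτ.1)
  have onC : EqOn γ (fun τ => c (τ - (la + lb))) (Icc (la + lb) (la + lb + lc)) :=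
    fun τ hτ => concatAt_of_ge hjoin hτ.1
  obtain ⟨p, hp, hsub⟩ := hTG.T2 γ la (la + lb) (la + lb + lc)
    (.of_eqOn ha hb hc hla hlb hlc hca onA onB onC dab dbc dca)
  refine ⟨p, hp, ?_, ?_, ?_⟩
  · rintro _ ⟨τ, hτ, rfl⟩
    exact hsub ⟨τ, ⟨hτ.1, by linarith [hτ.2]⟩, onA hτ⟩
  · rintro _ ⟨τ, hτ, rfl⟩
    refine hsub ⟨la + τ, ⟨by linarith [hτ.1], by linarith [hτ.2]⟩, ?_⟩
    rw [onB ⟨by linarith [hτ.1], by linarith [hτ.2]⟩]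
    simp only [add_sub_cancel_left]
  · rintro _ ⟨τ, hτ, rfl⟩
    refine hsub ⟨la + lb + τ, ⟨by linarith [hτ.1], by linarith [hτ.2]⟩, ?_⟩
    rw [onC ⟨by linarith [hτ.1], by linarith [hτ.2]⟩]
    simp only [add_sub_cancel_left]

lemma exists_piece_of_excursion (hTG : IsTreeGraded P) {g : ℝ → F} {l : ℝ}
    (hg : IsGeodesicOn g 0 l) (hl : 0 < l) {W : Set F} {w : F}
    (hu : JoinedByGeodesicIn W (g l) w) (hv : JoinedByGeodesicIn W w (g 0))
    (hgap : ∀ τ ∈ Ioo 0 l, g τ ∉ W) :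
    ∃ p ∈ P, g '' Icc 0 l ⊆ p ∧ ∃ C ⊆ W ∩ p, IsPreconnected C ∧ g 0 ∈ C ∧ g l ∈ C := by
  obtain ⟨u, lu, hlu, hu, hu0, hul, huW⟩ := hu
  obtain ⟨v, lv, hlv, hv, hv0, hvl, hvW⟩ := hv
  -- `u` runs from `g l` until it first meets `v`, and `v` is followed from there to `g 0`.
  obtain ⟨e, he, ⟨β, hβ, hβe⟩, hfirst⟩ := exists_first_mem_of_continuousOn hv.isClosed_image
    hu.continuousOn hlu ⟨0, ⟨le_rfl, hlv⟩, by rw [hul, hv0]⟩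
  have hv' := (hv.mono (Icc_subset_Icc hβ.1 le_rfl)).shift
  have hu_W : ∀ j ∈ Icc 0 e, u j ∈ W := fun j hj =>
    huW ⟨j, ⟨hj.1, hj.2.trans he.2⟩, rfl⟩
  have hv_W : ∀ j ∈ Icc 0 (lv - β), v (β + j) ∈ W := fun j hj =>
    hvW ⟨β + j, ⟨by linarith [hβ.1, hj.1], by linarith [hj.2]⟩, rfl⟩
  obtain ⟨p, hp, hgp, hup, hvp⟩ := hTG.exists_piece_of_loop hg (hu.mono
    (Icc_subset_Icc le_rfl he.2)) hv' hl he.1 (by linarith [hβ.2]) hu0.symm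
    (by rw [add_zero, hβe]) (by rw [add_sub_cancel, hvl])
    (fun i hi j hj hij => by
      rcases hi.1.eq_or_lt with rfl | hi0
      · exact hfirst j hj ⟨lv, ⟨hlv, le_rfl⟩, by rw [hvl, hij]⟩
      · exact hgap i ⟨hi0, hi.2⟩ (hij ▸ hu_W j (Ico_subset_Icc_self hj)))
    (fun i hi j hj hij => hfirst i hi
      ⟨β + j, ⟨by linarith [hβ.1, hj.1], by linarith [hj.2]⟩, hij.symm⟩)
    (fun i hi j hj hij => by
      rcases hj.1.eq_or_lt with rfl | hj0
      · have := hv.injOn ⟨by linarith [hβ.1, hi.1], by linarith [hi.2]⟩ ⟨hlv, le_rfl⟩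
          (hij.trans hvl.symm)
        linarith [hi.2]
      · exact hgap j ⟨hj0, hj.2⟩ (hij ▸ hv_W i (Ico_subset_Icc_self hi)))
  refine ⟨p, hp, hgp, u '' Icc 0 e ∪ (fun τ => v (β + τ)) '' Icc 0 (lv - β), ?_,
    ?_, ?_, ?_⟩
  · rintro _ (⟨j, hj, rfl⟩ | ⟨j, hj, rfl⟩)
    · exact ⟨hu_W j hj, hup ⟨j, hj, rfl⟩⟩
    · exact ⟨hv_W j hj, hvp ⟨j, hj, rfl⟩⟩
  · exact (isPreconnected_Icc.image _ (hu.continuousOn.mono (Icc_subset_Icc le_rfl he.2))).union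
      (u e) ⟨e, ⟨he.1, le_rfl⟩, rfl⟩ ⟨0, ⟨le_rfl, by linarith [hβ.2]⟩, by simp [hβe]⟩
      (isPreconnected_Icc.image _ hv'.continuousOn)
  · exact Or.inr ⟨lv - β, ⟨by linarith [hβ.2], le_rfl⟩, by simp [hvl]⟩
  · exact Or.inl ⟨0, ⟨le_rfl, he.1⟩, hu0⟩

lemma exists_piece_of_not_mem (hTG : IsTreeGraded P) {g : ℝ → F} {L : ℝ}
    (hg : IsGeodesicOn g 0 L) {W : Set F} (hW : IsClosed W) {w : F}
    (hstar : ∀ x ∈ W, JoinedByGeodesicIn W x w) (h0 : g 0 ∈ W) (hL : g L ∈ W)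
    {τ₀ : ℝ} (hτ₀ : τ₀ ∈ Icc 0 L) (hτ₀W : g τ₀ ∉ W) :
    ∃ p ∈ P, ∃ s t, 0 ≤ s ∧ s < τ₀ ∧ τ₀ < t ∧ t ≤ L ∧ g '' Icc s t ⊆ p ∧
      ∃ C ⊆ W ∩ p, IsPreconnected C ∧ g s ∈ C ∧ g t ∈ C := by
  have hL0 : 0 ≤ L := hτ₀.1.trans hτ₀.2
  obtain ⟨s, t, hs0, hsτ, hτt, htL, hsW, htW, hgap⟩ :=
    (hg.continuousOn.preimage_isClosed_of_isClosed isClosed_Icc hW).exists_gap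
      (c := τ₀) ⟨left_mem_Icc.2 hL0, h0⟩ ⟨right_mem_Icc.2 hL0, hL⟩ hτ₀ (fun h => hτ₀W h.2)
  have hshift := (hg.mono (Icc_subset_Icc hs0 htL)).shift
  obtain ⟨p, hp, hgp, C, hC, hCpre, hsC, htC⟩ := hTG.exists_piece_of_excursion (W := W) hshift
    (by linarith) (by simpa using hstar _ htW.2) (by simpa using (hstar _ hsW.2).symm)
    (fun τ hτ hτW => hgap (s + τ) ⟨by linarith [hτ.1], by linarith [hτ.2]⟩
      ⟨⟨by linarith [hτ.1], by linarith [hτ.2]⟩, hτW⟩)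
  refine ⟨p, hp, s, t, hs0, hsτ, hτt, htL, ?_, C, hC, hCpre, by simpa using hsC,
    by simpa using htC⟩
  rintro _ ⟨τ, hτ, rfl⟩
  exact hgp ⟨τ - s, ⟨by linarith [hτ.1], by linarith [hτ.2]⟩, by simp⟩

lemma eq_of_mem_inter (hTG : IsTreeGraded P) {p p' : Set F} (hp : p ∈ P) (hp' : p' ∈ P)
    {x y : F} (hx : x ∈ p ∩ p') (hy : y ∈ p ∩ p') (hxy : x ≠ y) : p = p' := by
  by_contra h
  exact hxy (hTG.T1 p hp p' hp' h hx hy)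

lemma image_subset_piece (hTG : IsTreeGraded P) {p : Set F} (hp : p ∈ P) {γ : ℝ → F}
    {L : ℝ} (hγ : IsGeodesicOn γ 0 L) (h0 : γ 0 ∈ p) (hL : γ L ∈ p) : γ '' Icc 0 L ⊆ p := by
  rintro _ ⟨τ₀, hτ₀, rfl⟩
  by_contra hτ₀p
  obtain ⟨α, hα0, hαd, hα, hαp⟩ := hTG.pieces_geodesic p hp _ h0 _ hL
  obtain ⟨p', hp', s, t, hs0, hsτ, hτt, htL, hγp', C, hC, -, hsC, htC⟩ :=
    hTG.exists_piece_of_not_mem hγ hα.isClosed_image (fun _ => hα.joinedByGeodesicIn_start)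
      ⟨0, ⟨le_rfl, dist_nonneg⟩, hα0⟩ ⟨_, ⟨dist_nonneg, le_rfl⟩, hαd⟩ hτ₀
      (fun h => hτ₀p (hαp h))
  have hst : γ s ≠ γ t := fun h => (hsτ.trans hτt).ne
    (hγ.injOn ⟨hs0, by linarith⟩ ⟨by linarith, htL⟩ h)
  have hpp' := hTG.eq_of_mem_inter hp hp' ⟨hαp (hC hsC).1, (hC hsC).2⟩
    ⟨hαp (hC htC).1, (hC htC).2⟩ hst
  exact hτ₀p (hpp' ▸ hγp' ⟨τ₀, ⟨hsτ.le, hτt.le⟩, rfl⟩)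

lemma first_entry_unique (hTG : IsTreeGraded P) {p : Set F} (hp : p ∈ P) {γ γ' : ℝ → F}
    {L L' e e' : ℝ} (hγ : IsGeodesicOn γ 0 L) (hγ' : IsGeodesicOn γ' 0 L') (h0 : γ 0 = γ' 0)
    (he : e ∈ Icc 0 L) (he' : e' ∈ Icc 0 L') (hep : γ e ∈ p) (he'p : γ' e' ∈ p)
    (hfirst : ∀ τ ∈ Ico 0 e, γ τ ∉ p) (hfirst' : ∀ τ ∈ Ico 0 e', γ' τ ∉ p) :
    γ e = γ' e' := by
  by_contra hne
  have hγe := hγ.mono (Icc_subset_Icc le_rfl he.2)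
  have hγe' := hγ'.mono (Icc_subset_Icc le_rfl he'.2)
  set W := γ '' Icc 0 e ∪ γ' '' Icc 0 e'
  have hWp : ∀ x ∈ W, x ∈ p → x = γ e ∨ x = γ' e' := by
    rintro _ (⟨σ, hσ, rfl⟩ | ⟨σ, hσ, rfl⟩) hσp
    · rcases hσ.2.eq_or_lt with rfl | h
      · exact Or.inl rfl
      · exact absurd hσp (hfirst σ ⟨hσ.1, h⟩)
    · rcases hσ.2.eq_or_lt with rfl | h
      · exact Or.inr rfl
      · exact absurd hσp (hfirst' σ ⟨hσ.1, h⟩)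
  obtain ⟨α, hα0, hαd, hα, hαp⟩ := hTG.pieces_geodesic p hp _ hep _ he'p
  set d := dist (γ e) (γ' e')
  have hd : 0 < d := dist_pos.2 hne
  have hmid : α (d / 2) ∉ W := by
    intro hW
    have hmem : d / 2 ∈ Icc 0 d := ⟨by linarith, by linarith⟩
    rcases hWp _ hW (hαp ⟨_, hmem, rfl⟩) with h | h
    · have := hα.injOn hmem ⟨le_rfl, hd.le⟩ (h.trans hα0.symm)
      linarith
    · have := hα.injOn hmem ⟨hd.le, le_rfl⟩ (h.trans hαd.symm)
      linarith
  obtain ⟨p', hp', s, t, hs0, hsτ, hτt, htd, -, C, hC, hCpre, hsC, htC⟩ :=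
    hTG.exists_piece_of_not_mem hα (hγe.isClosed_image.union hγe'.isClosed_image)
      (fun _ => joinedByGeodesicIn_union hγe hγe' h0) (Or.inl ⟨e, ⟨he.1, le_rfl⟩, hα0.symm⟩)
      (Or.inr ⟨e', ⟨he'.1, le_rfl⟩, hαd.symm⟩) ⟨by linarith, by linarith⟩ hmid
  have hs : s ∈ Icc 0 d := ⟨hs0, by linarith⟩
  have ht : t ∈ Icc 0 d := ⟨by linarith, htd⟩
  have hst : α s ≠ α t := fun h => (hsτ.trans hτt).ne (hα.injOn hs ht h)
  have hpp' := hTG.eq_of_mem_inter hp hp' ⟨hαp ⟨s, hs, rfl⟩, (hC hsC).2⟩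
    ⟨hαp ⟨t, ht, rfl⟩, (hC htC).2⟩ hst
  have hCpair : C ⊆ {γ e, γ' e'} := fun x hx => hWp x (hC hx).1 (hpp' ▸ (hC hx).2)
  exact hst ((toFinite _).countable.isTotallyDisconnected C hCpair hCpre hsC htC)

/-! ### Gates -/

lemma exists_gate (hTG : IsTreeGraded P) (hF : GeodesicSpace F) {p : Set F} (hp : p ∈ P)
    (u : F) : ∃ a ∈ p, ∀ (γ : ℝ → F) (L : ℝ), IsGeodesicOn γ 0 L → 0 ≤ L → γ 0 = u →
      γ L ∈ p → ∃ e ∈ Icc 0 L, γ e = a ∧ ∀ τ ∈ Ico 0 e, γ τ ∉ p := by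
  obtain ⟨w, hw⟩ := hTG.pieces_nonempty p hp
  obtain ⟨γ₀, h₀0, h₀w, hγ₀⟩ := hF u w
  obtain ⟨e₀, he₀, he₀p, hfirst₀⟩ := exists_first_mem_of_continuousOn (hTG.pieces_closed p hp)
    hγ₀.continuousOn dist_nonneg (h₀w.symm ▸ hw)
  refine ⟨γ₀ e₀, he₀p, fun γ L hγ hL h0 hLp => ?_⟩
  obtain ⟨e, he, hep, hfirst⟩ :=
    exists_first_mem_of_continuousOn (hTG.pieces_closed p hp) hγ.continuousOn hL hLp
  exact ⟨e, he, hTG.first_entry_unique hp hγ hγ₀ (h0.trans h₀0.symm) he he₀ hep he₀p hfirst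
    hfirst₀, hfirst⟩

/-- The gate (projection) of `u` in the piece `p`: every geodesic from `u` to a point of `p`
enters `p` for the first time at it. -/
noncomputable def gate (hTG : IsTreeGraded P) (hF : GeodesicSpace F) {p : Set F} (hp : p ∈ P)
    (u : F) : F :=
  (hTG.exists_gate hF hp u).choose

variable (hTG : IsTreeGraded P) (hF : GeodesicSpace F) {p : Set F} (hp : p ∈ P)

lemma gate_mem (u : F) : hTG.gate hF hp u ∈ p :=
  (hTG.exists_gate hF hp u).choose_spec.1

lemma exists_eq_gate {u : F} {γ : ℝ → F} {L : ℝ} (hγ : IsGeodesicOn γ 0 L) (hL : 0 ≤ L)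
    (h0 : γ 0 = u) (hLp : γ L ∈ p) :
    ∃ e ∈ Icc 0 L, γ e = hTG.gate hF hp u ∧ ∀ τ ∈ Ico 0 e, γ τ ∉ p :=
  (hTG.exists_gate hF hp u).choose_spec.2 γ L hγ hL h0 hLp

lemma gate_eq_self {u : F} (hu : u ∈ p) : hTG.gate hF hp u = u := by
  obtain ⟨e, -, he, -⟩ := hTG.exists_eq_gate hF hp (isGeodesicOn_const u 0) le_rfl rfl hu
  exact he.symm

lemma dist_gate_add (u : F) {w : F} (hw : w ∈ p) :
    dist u (hTG.gate hF hp u) + dist (hTG.gate hF hp u) w = dist u w := by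
  obtain ⟨γ, h0, hw', hγ⟩ := hF u w
  obtain ⟨e, he, hee, -⟩ := hTG.exists_eq_gate hF hp hγ dist_nonneg h0 (hw'.symm ▸ hw)
  have := hγ.dist_add_dist he
  rwa [h0, hw', hee] at this

lemma dist_gate_le (u : F) {w : F} (hw : w ∈ p) : dist u (hTG.gate hF hp u) ≤ dist u w := by
  linarith [hTG.dist_gate_add hF hp u hw, dist_nonneg (x := hTG.gate hF hp u) (y := w)]

lemma dist_gate_gate_le (u v : F) :
    dist (hTG.gate hF hp u) (hTG.gate hF hp v) ≤ 2 * dist u v := by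
  have h₁ := hTG.dist_gate_add hF hp v (hTG.gate_mem hF hp u)
  have h₂ := hTG.dist_gate_le hF hp u (hTG.gate_mem hF hp v)
  have t₁ := dist_triangle v u (hTG.gate hF hp u)
  have t₂ := dist_triangle u v (hTG.gate hF hp v)
  rw [dist_comm v u] at t₁
  rw [dist_comm (hTG.gate hF hp v)] at h₁
  linarith

lemma continuous_gate : Continuous (hTG.gate hF hp) :=
  (LipschitzWith.of_dist_le_mul (K := 2) fun u v => by
    simpa using hTG.dist_gate_gate_le hF hp u v).continuous

lemma gate_eq_of_dist_lt {u v : F} (huv : dist u v < dist u (hTG.gate hF hp u)) :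
    hTG.gate hF hp v = hTG.gate hF hp u := by
  by_contra hne
  have hpa := hTG.gate_mem hF hp u
  have hpb := hTG.gate_mem hF hp v
  obtain ⟨γ, hγ0, hγb, hγ⟩ := hF u (hTG.gate hF hp v)
  obtain ⟨e, he, hea, hfirst⟩ := hTG.exists_eq_gate hF hp hγ dist_nonneg hγ0 (hγb.symm ▸ hpb)
  obtain ⟨η, hη0, hηu, hη⟩ := hF v u
  obtain ⟨β, hβ0, hβb, hβ⟩ := hF v (hTG.gate hF hp v)
  have hβp : ∀ σ ∈ Icc 0 (dist v (hTG.gate hF hp v)), β σ ∈ p → β σ = hTG.gate hF hp v := by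
    intro σ hσ hσp
    obtain ⟨e', he', he'b, hfirst'⟩ := hTG.exists_eq_gate hF hp hβ dist_nonneg hβ0 (hβb.symm ▸ hpb)
    have he'_end := hβ.injOn he' ⟨dist_nonneg, le_rfl⟩ (he'b.trans hβb.symm)
    have hσ_end : σ = dist v (hTG.gate hF hp v) :=
      le_antisymm hσ.2 (he'_end ▸ le_of_not_gt fun h => hfirst' σ ⟨hσ.1, h⟩ hσp)
    rw [hσ_end, hβb]
  have hgW : γ e ∉ η '' Icc 0 (dist v u) ∪ β '' Icc 0 (dist v (hTG.gate hF hp v)) := by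
    rintro (⟨σ, hσ, hσe⟩ | ⟨σ, hσ, hσe⟩)
    · have := hη.dist_eq hσ ⟨dist_nonneg, le_rfl⟩ hσ.2
      rw [hσe, hηu, hea, dist_comm, dist_comm v] at this
      linarith [hσ.1]
    · exact hne (((hβp σ hσ (hσe ▸ hea ▸ hpa)).symm.trans hσe).trans hea)
  obtain ⟨p', hp', s, t, hs0, hse, het, htL, hγp', -⟩ :=
    hTG.exists_piece_of_not_mem hγ (hη.isClosed_image.union hβ.isClosed_image)
      (fun _ => joinedByGeodesicIn_union hη hβ (hη0.trans hβ0.symm))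
      (Or.inl ⟨_, ⟨dist_nonneg, le_rfl⟩, hηu.trans hγ0.symm⟩)
      (Or.inr ⟨_, ⟨dist_nonneg, le_rfl⟩, hβb.trans hγb.symm⟩) he hgW
  have htp : γ t ∈ p := by
    have hafter := (hγ.mono (Icc_subset_Icc he.1 le_rfl)).shift
    refine hTG.image_subset_piece hp hafter (by simpa [hea] using hpa) (by simpa [hγb] using hpb)
      ⟨t - e, ⟨by linarith, by linarith⟩, by simp⟩
  have hpp' := hTG.eq_of_mem_inter hp hp' ⟨hea ▸ hpa, hγp' ⟨e, ⟨hse.le, het.le⟩, rfl⟩⟩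
    ⟨htp, hγp' ⟨t, ⟨(hse.trans het).le, le_rfl⟩, rfl⟩⟩
    (fun h => het.ne (hγ.injOn he ⟨by linarith [he.1], htL⟩ h))
  exact hfirst s ⟨hs0, hse⟩ (hpp' ▸ hγp' ⟨s, ⟨le_rfl, (hse.trans het).le⟩, rfl⟩)

lemma gate_eventually_eq {u : F} (hu : u ∉ p) :
    ∀ᶠ v in 𝓝 u, hTG.gate hF hp v = hTG.gate hF hp u := by
  have hpos : 0 < dist u (hTG.gate hF hp u) :=
    dist_pos.2 fun h => hu (h ▸ hTG.gate_mem hF hp u)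
  filter_upwards [Metric.ball_mem_nhds u hpos] with v hv
  exact hTG.gate_eq_of_dist_lt hF hp (by rwa [Metric.mem_ball, dist_comm] at hv)

lemma gate_comp_eq_of_forall_not_mem {q : ℝ → F} (hq : Continuous q) {S : Set ℝ}
    (hS : IsPreconnected S) (hqS : ∀ τ ∈ S, q τ ∉ p) {a b : ℝ} (ha : a ∈ S) (hb : b ∈ S) :
    hTG.gate hF hp (q a) = hTG.gate hF hp (q b) :=
  eq_of_germ_isConstant_on (f := fun τ => hTG.gate hF hp (q τ))
    (fun τ hτ => ⟨_, (hq.tendsto τ).eventually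
      (p := fun v => hTG.gate hF hp v = hTG.gate hF hp (q τ))
      (hTG.gate_eventually_eq hF hp (hqS τ hτ))⟩)
    hS ha hb

lemma exists_eq_gate_of_continuous {q : ℝ → F} (hq : Continuous q) {T : ℝ} (hT : 0 ≤ T)
    (hTp : q T ∈ p) : ∃ τ ∈ Icc 0 T, q τ = hTG.gate hF hp (q 0) := by
  by_cases h0 : q 0 ∈ p
  · exact ⟨0, ⟨le_rfl, hT⟩, (hTG.gate_eq_self hF hp h0).symm⟩
  obtain ⟨e, he, hep, hfirst⟩ :=
    exists_first_mem_of_continuousOn (hTG.pieces_closed p hp) hq.continuousOn hT hTp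
  have he0 : 0 ≠ e := fun h => h0 (h ▸ hep)
  have hconst : EqOn (fun τ => hTG.gate hF hp (q τ)) (fun _ => hTG.gate hF hp (q 0)) (Ico 0 e) :=
    fun τ hτ => hTG.gate_comp_eq_of_forall_not_mem hF hp hq isPreconnected_Ico hfirst hτ
      ⟨le_rfl, he.1.lt_of_ne he0⟩
  have hclosure := hconst.closure ((hTG.continuous_gate hF hp).comp hq) continuous_const
  rw [closure_Ico he0] at hclosure
  exact ⟨e, he, (hTG.gate_eq_self hF hp hep).symm.trans (hclosure ⟨he.1, le_rfl⟩)⟩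

lemma gate_eq_of_gate_eq_gate {γ : ℝ → F} {D t₀ : ℝ}
    (hγ : IsGeodesicOn γ 0 D) (ht₀ : t₀ ∈ Icc 0 D) (hp₀ : γ t₀ ∈ p)
    (hgate : hTG.gate hF hp (γ 0) = hTG.gate hF hp (γ D)) : hTG.gate hF hp (γ 0) = γ t₀ := by
  obtain ⟨e, he, hee, -⟩ := hTG.exists_eq_gate hF hp (hγ.mono (Icc_subset_Icc le_rfl ht₀.2))
    ht₀.1 rfl hp₀
  have hback : IsGeodesicOn (fun τ => γ (D - τ)) 0 (D - t₀) :=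
    (hγ.comp_const_sub D).mono (Icc_subset_Icc (by simp) (by linarith [ht₀.1]))
  obtain ⟨e', he', he'e, -⟩ := hTG.exists_eq_gate hF hp (u := γ D) hback (by linarith [ht₀.2])
    (by simp) (by simpa using hp₀)
  have hsame := hγ.injOn ⟨he.1, he.2.trans ht₀.2⟩
    ⟨by linarith [he'.2, ht₀.1], by linarith [he'.1]⟩ (hee.trans (hgate.trans he'e.symm))
  rw [← hee, le_antisymm he.2 (by linarith [he'.2])]

lemma dist_add_dist_eq_of_dist_lt {x z q q' : F}
    (hcut : ∀ p (hp : p ∈ P), z ∈ p → hTG.gate hF hp x = z)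
    (hz : dist x z + dist z q = dist x q) (hq' : dist q q' < dist z q) :
    dist x z + dist z q' = dist x q' := by
  by_contra hne
  obtain ⟨γ, hγ0, hγz, hγ⟩ := hF x z
  obtain ⟨k, hk0, hkq, hk⟩ := hF z q
  have hg := hγ.concat hk dist_nonneg dist_nonneg (hγz.trans hk0.symm) (by rw [hγ0, hkq, hz])
  set g := concatAt γ k (dist x z)
  have hg0 : g 0 = x := (concatAt_of_le dist_nonneg).trans hγ0
  have hgz : g (dist x z) = z := (concatAt_of_le le_rfl).trans hγz
  have hgq : g (dist x z + dist z q) = q := by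
    refine (concatAt_of_ge (hγz.trans hk0.symm) (le_add_of_nonneg_right dist_nonneg)).trans ?_
    rw [add_sub_cancel_left, hkq]
  obtain ⟨η, hη0, hηx, hη⟩ := hF q' x
  obtain ⟨θ, hθ0, hθq, hθ⟩ := hF q' q
  have hzW : z ∉ η '' Icc 0 (dist q' x) ∪ θ '' Icc 0 (dist q' q) := by
    rintro (⟨σ, hσ, rfl⟩ | ⟨σ, hσ, rfl⟩)
    · have := hη.dist_add_dist hσ
      rw [hη0, hηx, dist_comm q', dist_comm _ x, dist_comm q'] at this
      exact hne (by linarith)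
    · have := hθ.dist_eq hσ ⟨dist_nonneg, le_rfl⟩ hσ.2
      rw [hθq, dist_comm q'] at this
      linarith [hσ.1]
  obtain ⟨p, hp, s, t, hs0, hsz, hzt, htL, hgp, -⟩ :=
    hTG.exists_piece_of_not_mem hg (hη.isClosed_image.union hθ.isClosed_image)
      (fun _ => joinedByGeodesicIn_union hη hθ (hη0.trans hθ0.symm))
      (Or.inl ⟨_, ⟨dist_nonneg, le_rfl⟩, hηx.trans hg0.symm⟩)
      (Or.inr ⟨_, ⟨dist_nonneg, le_rfl⟩, hθq.trans hgq.symm⟩)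
      ⟨dist_nonneg, by linarith [dist_nonneg (x := z) (y := q)]⟩ (hgz ▸ hzW)
  -- The gate of `x` in `p` is where `g` enters `p`, at or before `s`; but it is `z`.
  obtain ⟨e, he, hee, hfirst⟩ := hTG.exists_eq_gate hF hp (hg.mono (Icc_subset_Icc le_rfl htL))
    (by linarith) hg0 (hgp ⟨t, ⟨(hsz.trans hzt).le, le_rfl⟩, rfl⟩)
  rw [hcut p hp (hgz ▸ hgp ⟨_, ⟨hsz.le, hzt.le⟩, rfl⟩), ← hgz] at hee
  have := hg.injOn ⟨he.1, he.2.trans htL⟩ ⟨dist_nonneg, (hzt.trans_le htL).le⟩ hee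
  exact hfirst s ⟨hs0, by linarith⟩ (hgp ⟨s, ⟨le_rfl, (hsz.trans hzt).le⟩, rfl⟩)

lemma dist_add_dist_eq_of_continuous {x z : F}
    (hcut : ∀ p (hp : p ∈ P), z ∈ p → hTG.gate hF hp x = z) {q : ℝ → F} (hq : Continuous q)
    (hqz : ∀ τ, q τ ≠ z) (h1 : dist x z + dist z (q 1) = dist x (q 1)) :
    dist x z + dist z (q 0) = dist x (q 0) := by
  set A := {τ : ℝ | dist x z + dist z (q τ) = dist x (q τ)}
  have hclosed : IsClosed A := isClosed_eq (by fun_prop) (by fun_prop)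
  have hopen : IsOpen A := by
    refine isOpen_iff_eventually.2 fun τ hτ => ?_
    have hpos : 0 < dist z (q τ) := dist_pos.2 (hqz τ).symm
    filter_upwards [(hq.tendsto τ).eventually (Metric.ball_mem_nhds (q τ) hpos)] with τ' hτ'
    exact hTG.dist_add_dist_eq_of_dist_lt hF hcut hτ (by rwa [dist_comm] at hτ')
  have hA : A = univ := IsClopen.eq_univ ⟨hclosed, hopen⟩ ⟨1, h1⟩
  exact (hA ▸ mem_univ 0 : (0 : ℝ) ∈ A)

end IsTreeGraded

/-! ### Q-subtrees -/

lemma JoinedIn.exists_continuous {X : Type*} [TopologicalSpace X] {S : Set X} {x y : X}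
    (h : JoinedIn S x y) : ∃ q : ℝ → X, Continuous q ∧ q 0 = x ∧ q 1 = y ∧ ∀ τ, q τ ∈ S := by
  have hrange : range h.somePath.extend ⊆ S :=
    h.somePath.extend_range ▸ range_subset_iff.2 h.somePath_mem
  exact ⟨_, h.somePath.continuous_extend, h.somePath.extend_zero, h.somePath.extend_one,
    fun τ => hrange (mem_range_self τ)⟩

namespace IsQSubtree

variable {P : Set (Set F)} {F' : Set F}

/-- The path passes through both gates, two distinct points of `p ∩ F'`. -/
lemma subset_of_gate_ne (hF' : IsQSubtree P F') (hTG : IsTreeGraded P) (hF : GeodesicSpace F)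
    {q : ℝ → F} (hq : Continuous q) (hqF : ∀ τ, q τ ∈ F') {p : Set F}
    (hp : p ∈ P) (hne : hTG.gate hF hp (q 0) ≠ hTG.gate hF hp (q 1)) : p ⊆ F' := by
  obtain ⟨τ, hτ, hτp⟩ : ∃ τ ∈ Icc (0 : ℝ) 1, q τ ∈ p := by
    by_contra! h
    exact hne (hTG.gate_comp_eq_of_forall_not_mem hF hp hq isPreconnected_Icc h
      (left_mem_Icc.2 zero_le_one) (right_mem_Icc.2 zero_le_one))
  obtain ⟨σ, -, hσ⟩ := hTG.exists_eq_gate_of_continuous hF hp hq hτ.1 hτp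
  obtain ⟨σ', -, hσ'⟩ := hTG.exists_eq_gate_of_continuous hF hp (q := fun τ => q (1 - τ))
    (by fun_prop) (T := 1 - τ) (by linarith [hτ.2]) (by simpa using hτp)
  simp only [sub_zero] at hσ'
  exact hF'.2 p hp ⟨_, ⟨hTG.gate_mem hF hp _, hσ ▸ hqF σ⟩, _,
    ⟨hTG.gate_mem hF hp _, hσ' ▸ hqF _⟩, hne⟩

lemma mem_of_isGeodesicOn (hF' : IsQSubtree P F') (hTG : IsTreeGraded P)
    (hF : GeodesicSpace F) {γ : ℝ → F} {D : ℝ} (hγ : IsGeodesicOn γ 0 D) (h0 : γ 0 ∈ F')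
    (hD : γ D ∈ F') {t₀ : ℝ} (ht₀ : t₀ ∈ Icc 0 D) : γ t₀ ∈ F' := by
  by_contra hz
  obtain ⟨q, hq, hq0, hq1, hqF⟩ := (hF'.1.joinedIn _ h0 _ hD).exists_continuous
  by_cases hsplit : ∃ p, ∃ hp : p ∈ P, γ t₀ ∈ p ∧ hTG.gate hF hp (γ 0) ≠ hTG.gate hF hp (γ D)
  · obtain ⟨p, hp, hzp, hne⟩ := hsplit
    exact hz (hF'.subset_of_gate_ne hTG hF hq hqF hp (by rwa [hq0, hq1]) hzp)
  push Not at hsplit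
  have hcut : ∀ p (hp : p ∈ P), γ t₀ ∈ p → hTG.gate hF hp (γ 0) = γ t₀ :=
    fun p hp hzp => hTG.gate_eq_of_gate_eq_gate hF hp hγ ht₀ hzp (hsplit p hp hzp)
  have := hTG.dist_add_dist_eq_of_continuous hF hcut hq (fun τ h => hz (h ▸ hqF τ))
    (by rw [hq1]; exact hγ.dist_add_dist ht₀)
  rw [hq0, dist_self, dist_comm] at this
  exact hz (dist_le_zero.1 (by linarith [dist_nonneg (x := γ t₀) (y := γ 0)]) ▸ h0)

end IsQSubtree

lemma exists_eq_Icc_or_Ico {S : Set ℝ} {D : ℝ} (hS : S ⊆ Icc 0 D) (h0 : 0 ∈ S)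
    (hdown : ∀ t ∈ S, Icc 0 t ⊆ S) :
    ∃ z, 0 ≤ z ∧ z ≤ D ∧ (S = Icc 0 z ∨ S = Ico 0 z) := by
  have hbdd : BddAbove S := ⟨D, fun t ht => (hS ht).2⟩
  refine ⟨sSup S, le_csSup hbdd h0, csSup_le ⟨0, h0⟩ fun t ht => (hS ht).2, ?_⟩
  by_cases hz : sSup S ∈ S
  · exact Or.inl (Subset.antisymm (fun t ht => ⟨(hS ht).1, le_csSup hbdd ht⟩) (hdown _ hz))
  · refine Or.inr (Subset.antisymm (fun t ht => ⟨(hS ht).1, (le_csSup hbdd ht).lt_of_ne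
      fun h => hz (h ▸ ht)⟩) fun u hu => ?_)
    obtain ⟨t, ht, hut⟩ := exists_lt_of_lt_csSup ⟨0, h0⟩ hu.2
    exact hdown t ht ⟨hu.1, hut.le⟩

end

theorem stmt_13_general {F : Type*} [MetricSpace F] (hF : GeodesicSpace F)
    (P : Set (Set F)) (hTG : IsTreeGraded P) (F' : Set F) (hF' : IsQSubtree P F') :
    (∀ x ∈ F', ∀ y ∈ F', ∀ γ : ℝ → F, γ 0 = x → γ (dist x y) = y →
      IsGeodesicOn γ 0 (dist x y) → γ '' Set.Icc 0 (dist x y) ⊆ F') ∧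
    (∀ y ∈ F', ∀ x : F, ∀ γ : ℝ → F, γ 0 = y → γ (dist y x) = x →
      IsGeodesicOn γ 0 (dist y x) →
      ∃ z : ℝ, 0 ≤ z ∧ z ≤ dist y x ∧
        ({t : ℝ | t ∈ Set.Icc 0 (dist y x) ∧ γ t ∈ F'} = Set.Icc 0 z ∨
         {t : ℝ | t ∈ Set.Icc 0 (dist y x) ∧ γ t ∈ F'} = Set.Ico 0 z)) := by
  refine ⟨fun x hx y hy γ hγx hγy hγ => ?_, fun y hy x γ hγy _ hγ => ?_⟩
  · rintro _ ⟨t, ht, rfl⟩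
    exact hF'.mem_of_isGeodesicOn hTG hF hγ (by rwa [hγx]) (by rwa [hγy]) ht
  · refine exists_eq_Icc_or_Ico (fun t ht => ht.1) ⟨⟨le_rfl, dist_nonneg⟩, by rwa [hγy]⟩
      fun t ht u hu => ⟨⟨hu.1, hu.2.trans ht.1.2⟩, ?_⟩
    exact hF'.mem_of_isGeodesicOn hTG hF (hγ.mono (Icc_subset_Icc le_rfl ht.1.2))
      (by rwa [hγy]) ht.2 hu

/-- a `Q`-subtree `F'` is totally geodesic; consequently for `y ∈ F'` and
`x ∈ F`, the intersection of any geodesic `[y,x]` with `F'` is a closed subsegment `[y,z]`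
or a half-open subinterval `[y,z[`. -/
theorem stmt_13 {F : Type*} [MetricSpace F] [CompleteSpace F] (hF : GeodesicSpace F)
    (P : Set (Set F)) (hTG : IsTreeGraded P) (F' : Set F) (hF' : IsQSubtree P F') :
    (∀ x ∈ F', ∀ y ∈ F', ∀ γ : ℝ → F, γ 0 = x → γ (dist x y) = y →
      IsGeodesicOn γ 0 (dist x y) → γ '' Set.Icc 0 (dist x y) ⊆ F') ∧
    (∀ y ∈ F', ∀ x : F, ∀ γ : ℝ → F, γ 0 = y → γ (dist y x) = x →
      IsGeodesicOn γ 0 (dist y x) →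
      ∃ z : ℝ, 0 ≤ z ∧ z ≤ dist y x ∧
        ({t : ℝ | t ∈ Set.Icc 0 (dist y x) ∧ γ t ∈ F'} = Set.Icc 0 z ∨
         {t : ℝ | t ∈ Set.Icc 0 (dist y x) ∧ γ t ∈ F'} = Set.Ico 0 z)) :=
  stmt_13_general hF P hTG F' hF'
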